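/- Let f : [0,θ] → ℝ be bounded and monotone. Then var(Uf) ≤ (1/(m+1))·var(f), where for a function g : [0,θ] → ℝ, var(g) denotes the total variation of g on [0,θ], i.e. var(g) = sup Σ_{i=1}^{k−1} |g(t_i) − g(t_{i−1})| over all finite increasing sequences t_0 < t_1 < ⋯ < t_{k−1} in [0,θ]. -/

import Mathlib

/-!
The weights telescope, `P_i = F_i - F_{i+1}` with `F_i(x) = (1 + θx) / (θ(x + iθ))`, `F_m = 1`
and `F_i → 0`, so for each `x` they form a probability distribution on `i ≥ m` whose tails
`F_i(x)` increase with `x`. For increasing `f` the values `f (u_i x)` decrease both in `i` and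
in `x`, so Abel summation shows that `Uf` is decreasing and `var(Uf) = Uf(0) - Uf(θ)`. As
`P_i(θ) = (m+1)/m · P_{i+1}(0)` and `u_i(θ) = u_{i+1}(0)`, this difference is
`f(θ)/(m+1) - (1/m) ∑_{i>m} P_i(0) f(u_i(0))`, which is at most `(f(θ) - f(0))/(m+1) = var(f)/(m+1)`
because `∑_{i>m} P_i(0) = m/(m+1)`. Decreasing functions reduce to increasing ones through
`U(-f) = -Uf`.
-/

open MeasureTheory Real Set
open scoped ENNReal

/-- θ = 1/√m. -/
noncomputable def theta (m : ℕ) : ℝ := 1 / Real.sqrt m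

/-- u_i(x) = 1/(iθ + x). -/
noncomputable def uMap (m i : ℕ) (x : ℝ) : ℝ := 1 / (i * theta m + x)

/-- P_i(x) = (1+θx)/((x+iθ)(x+(i+1)θ)). -/
noncomputable def Pfun (m i : ℕ) (x : ℝ) : ℝ :=
  (1 + theta m * x) / ((x + i * theta m) * (x + (i + 1) * theta m))

/-- The Perron-Frobenius operator Uf(x) = Σ_{i≥m} P_i(x)·f(u_i(x)). -/
noncomputable def Uop (m : ℕ) (f : ℝ → ℝ) (x : ℝ) : ℝ :=
  ∑' i : ℕ, Pfun m (i + m) x * f (uMap m (i + m) x)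

open Filter Topology

theorem tsum_sub_mul_le_tsum_sub_mul_of_antitone {G H a : ℕ → ℝ} (h0 : G 0 = H 0)
    (hGH : G ≤ H) (hG : Tendsto G atTop (𝓝 0)) (hH : Tendsto H atTop (𝓝 0))
    (ha : Antitone a) {C : ℝ} (hC : ∀ n, |a n| ≤ C)
    (hsG : Summable fun i ↦ (G i - G (i + 1)) * a i)
    (hsH : Summable fun i ↦ (H i - H (i + 1)) * a i) :
    ∑' i, (H i - H (i + 1)) * a i ≤ ∑' i, (G i - G (i + 1)) * a i := by
  set D := G - H
  set S : ℕ → ℝ := fun n ↦ ∑ i ∈ Finset.range n, (D i - D (i + 1)) * a i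
  -- Abel summation: `S n + D n * a n` is a sum of nonnegative terms `D (i+1) * (a (i+1) - a i)`.
  have hS_add : ∀ n, 0 ≤ S n + D n * a n := by
    intro n
    induction n with
    | zero => simp [S, D, h0]
    | succ n ih =>
      have : 0 ≤ D (n + 1) * (a (n + 1) - a n) :=
        mul_nonneg_of_nonpos_of_nonpos (sub_nonpos.2 (hGH _)) (sub_nonpos.2 (ha n.le_succ))
      simp only [S, Finset.sum_range_succ] at ih ⊢
      linarith
  have hS : Tendsto S atTop
      (𝓝 (∑' i, (G i - G (i + 1)) * a i - ∑' i, (H i - H (i + 1)) * a i)) := by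
    refine ((hsG.hasSum.sub hsH.hasSum).tendsto_sum_nat).congr fun n ↦ ?_
    simp only [S, D, Pi.sub_apply]
    exact Finset.sum_congr rfl fun i _ ↦ by ring
  have hDa : Tendsto (fun n ↦ D n * a n) atTop (𝓝 0) :=
    (sub_zero (0 : ℝ) ▸ hG.sub hH : Tendsto D atTop (𝓝 0)).zero_mul_isBoundedUnder_le
      ⟨C, eventually_map.2 (Eventually.of_forall hC)⟩
  have := ge_of_tendsto' (by simpa using hS.add hDa) hS_add
  linarith

/-- Closed form of the tail `∑_{j ≥ k} P_j(x)`. -/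
noncomputable def Ptail (m k : ℕ) (x : ℝ) : ℝ :=
  (1 + theta m * x) / (theta m * (x + k * theta m))

section Weights

variable {m k : ℕ} {x y : ℝ}

lemma theta_pos (hm : 0 < m) : 0 < theta m :=
  one_div_pos.2 (Real.sqrt_pos.2 (by exact_mod_cast hm))

lemma natCast_mul_theta_sq (hm : 0 < m) : (m : ℝ) * theta m ^ 2 = 1 := by
  have : (m : ℝ) ≠ 0 := by exact_mod_cast hm.ne'
  rw [theta, div_pow, Real.sq_sqrt (Nat.cast_nonneg m)]
  field_simp

lemma one_le_natCast_mul_theta_sq (hm : 0 < m) (hk : m ≤ k) : 1 ≤ (k : ℝ) * theta m ^ 2 :=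
  natCast_mul_theta_sq hm ▸ by gcongr

lemma add_natCast_mul_theta_pos (hm : 0 < m) (hk : m ≤ k) (hx : 0 ≤ x) :
    0 < x + k * theta m := by
  have : (0 : ℝ) < k := by exact_mod_cast hm.trans_le hk
  have := theta_pos hm
  positivity

lemma Pfun_eq_Ptail_sub (hm : 0 < m) (hk : m ≤ k) (hx : 0 ≤ x) :
    Pfun m k x = Ptail m k x - Ptail m (k + 1) x := by
  have hθ := theta_pos hm
  have h₁ := add_natCast_mul_theta_pos hm hk hx
  have h₂ := add_natCast_mul_theta_pos hm (hk.trans k.le_succ) hx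
  push_cast at h₂
  simp only [Pfun, Ptail]
  push_cast
  rw [div_sub_div _ _ (by positivity) (by positivity),
    div_eq_div_iff (by positivity) (by positivity)]
  ring

lemma Pfun_nonneg (hm : 0 < m) (hk : m ≤ k) (hx : 0 ≤ x) : 0 ≤ Pfun m k x := by
  have hθ := theta_pos hm
  have h₁ := add_natCast_mul_theta_pos hm hk hx
  have h₂ := add_natCast_mul_theta_pos hm (hk.trans k.le_succ) hx
  push_cast at h₂
  unfold Pfun
  positivity

lemma Ptail_self (hm : 0 < m) (hx : 0 ≤ x) : Ptail m m x = 1 := by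
  have hθ := theta_pos hm
  have key : theta m * (x + m * theta m) = 1 + theta m * x := by
    linear_combination natCast_mul_theta_sq hm
  rw [Ptail, key, div_self (by positivity)]

lemma Ptail_succ_self_zero (hm : 0 < m) : Ptail m (m + 1) 0 = m / (m + 1) := by
  have hθ := theta_pos hm
  have : (m : ℝ) ≠ 0 := by exact_mod_cast hm.ne'
  simp only [Ptail]
  push_cast
  field_simp
  linear_combination (-(m : ℝ) - 1) * natCast_mul_theta_sq hm

/-- Since `k θ² ≥ 1`, the tail `(1 + θx) / (θx + kθ²)` increases with `x`. -/
lemma Ptail_mono (hm : 0 < m) (hk : m ≤ k) (hx : 0 ≤ x) (hxy : x ≤ y) :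
    Ptail m k x ≤ Ptail m k y := by
  have hθ := theta_pos hm
  have h₁ := add_natCast_mul_theta_pos hm hk hx
  have h₂ := add_natCast_mul_theta_pos hm hk (hx.trans hxy)
  have hk₁ := one_le_natCast_mul_theta_sq hm hk
  rw [Ptail, Ptail, div_le_div_iff₀ (by positivity) (by positivity)]
  nlinarith [mul_nonneg (sub_nonneg.2 hxy) (sub_nonneg.2 hk₁)]

lemma tendsto_Ptail_atTop (hm : 0 < m) (x : ℝ) :
    Tendsto (fun k : ℕ ↦ Ptail m k x) atTop (𝓝 0) := by
  have hθ := theta_pos hm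
  have hden : Tendsto (fun k : ℕ ↦ theta m * (x + k * theta m)) atTop atTop :=
    (tendsto_atTop_add_const_left _ x
      (tendsto_natCast_atTop_atTop.atTop_mul_const hθ)).const_mul_atTop hθ
  exact tendsto_const_nhds.div_atTop hden

lemma hasSum_Pfun (hm : 0 < m) (hk : m ≤ k) (hx : 0 ≤ x) :
    HasSum (fun i ↦ Pfun m (i + k) x) (Ptail m k x) := by
  have hP : ∀ i, Pfun m (i + k) x = Ptail m (i + k) x - Ptail m (i + 1 + k) x := fun i ↦ by
    rw [Pfun_eq_Ptail_sub hm (hk.trans (k.le_add_left i)) hx, Nat.add_right_comm]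
  rw [hasSum_iff_tendsto_nat_of_nonneg (fun i ↦ Pfun_nonneg hm (hk.trans (k.le_add_left i)) hx)]
  simp only [hP, Finset.sum_range_sub' (fun i ↦ Ptail m (i + k) x), zero_add]
  simpa using tendsto_const_nhds.sub ((tendsto_Ptail_atTop hm x).comp (tendsto_add_atTop_nat k))

lemma summable_Pfun_mul (hm : 0 < m) (hk : m ≤ k) (hx : 0 ≤ x) {g : ℕ → ℝ} {C : ℝ}
    (hg : ∀ i, |g i| ≤ C) : Summable fun i ↦ Pfun m (i + k) x * g i := by
  refine Summable.of_norm_bounded ((hasSum_Pfun hm hk hx).summable.mul_right C) fun i ↦ ?_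
  rw [Real.norm_eq_abs, abs_mul, abs_of_nonneg (Pfun_nonneg hm (hk.trans (k.le_add_left i)) hx)]
  exact mul_le_mul_of_nonneg_left (hg i) (Pfun_nonneg hm (hk.trans (k.le_add_left i)) hx)

lemma Pfun_theta (hm : 0 < m) (k : ℕ) :
    Pfun m k (theta m) = (m + 1) / m * Pfun m (k + 1) 0 := by
  have hθ := theta_pos hm
  have : (m : ℝ) ≠ 0 := by exact_mod_cast hm.ne'
  simp only [Pfun]
  push_cast
  field_simp
  linear_combination (theta m ^ 2 * ((k : ℝ) ^ 2 + 3 * k + 2)) * natCast_mul_theta_sq hm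

lemma Pfun_self_zero (hm : 0 < m) : Pfun m m 0 = 1 / (m + 1) := by
  have hθ := theta_pos hm
  simp only [Pfun]
  field_simp
  linear_combination (-((m : ℝ) + 1)) * natCast_mul_theta_sq hm

end Weights

section Branches

variable {m k : ℕ} {x : ℝ}

lemma uMap_theta (k : ℕ) : uMap m k (theta m) = uMap m (k + 1) 0 := by
  simp only [uMap]
  push_cast
  ring_nf

lemma uMap_self_zero (hm : 0 < m) : uMap m m 0 = theta m := by
  have hθ := theta_pos hm
  rw [uMap, add_zero, div_eq_iff (by positivity)]
  linear_combination -natCast_mul_theta_sq hm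

lemma uMap_mem_Icc (hm : 0 < m) (hk : m ≤ k) (hx : x ∈ Icc 0 (theta m)) :
    uMap m k x ∈ Icc 0 (theta m) := by
  have hθ := theta_pos hm
  have hd := add_natCast_mul_theta_pos hm hk hx.1
  have hk₁ := one_le_natCast_mul_theta_sq hm hk
  rw [add_comm] at hd
  refine ⟨by rw [uMap]; positivity, ?_⟩
  rw [uMap, div_le_iff₀ hd]
  nlinarith [hx.1]

lemma uMap_antitoneOn (hm : 0 < m) (hk : m ≤ k) : AntitoneOn (uMap m k) (Ici 0) :=
  fun x hx _ _ hxy ↦ one_div_le_one_div_of_le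
    (by linarith [add_natCast_mul_theta_pos hm hk (mem_Ici.1 hx)]) (by linarith)

lemma antitone_uMap_add (hm : 0 < m) (hx : 0 ≤ x) : Antitone fun i ↦ uMap m (i + m) x := by
  refine antitone_nat_of_succ_le fun i ↦ one_div_le_one_div_of_le
    (by linarith [add_natCast_mul_theta_pos hm (m.le_add_left i) hx]) ?_
  push_cast
  linarith [theta_pos hm]

end Branches

lemma abs_le_max_abs_abs_of_monotoneOn {α : Type*} [Preorder α] {f : α → ℝ} {a b x : α}
    (hf : MonotoneOn f (Icc a b)) (hx : x ∈ Icc a b) : |f x| ≤ max |f a| |f b| :=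
  abs_le_max_abs_abs (hf ⟨le_rfl, hx.1.trans hx.2⟩ hx hx.1) (hf hx ⟨hx.1.trans hx.2, le_rfl⟩ hx.2)

lemma eVariationOn_neg {α E : Type*} [LinearOrder α] [SeminormedAddCommGroup E] (f : α → E)
    (s : Set α) : eVariationOn (-f) s = eVariationOn f s := by
  simp only [eVariationOn, Pi.neg_apply, edist_neg_neg]

section Operator

variable {m : ℕ} {f : ℝ → ℝ}

lemma Uop_neg (m : ℕ) (f : ℝ → ℝ) : Uop m (-f) = -Uop m f := by
  funext x
  simp only [Uop, Pi.neg_apply, mul_neg, tsum_neg]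

lemma Uop_antitoneOn (hm : 0 < m) (hf : MonotoneOn f (Icc 0 (theta m))) :
    AntitoneOn (Uop m f) (Icc 0 (theta m)) := by
  intro x hx y hy hxy
  have hu : ∀ z ∈ Icc 0 (theta m), ∀ i, uMap m (i + m) z ∈ Icc 0 (theta m) :=
    fun z hz i ↦ uMap_mem_Icc hm (m.le_add_left i) hz
  have hbdd : ∀ z ∈ Icc 0 (theta m), ∀ i, |f (uMap m (i + m) z)| ≤ max |f 0| |f (theta m)| :=
    fun z hz i ↦ abs_le_max_abs_abs_of_monotoneOn hf (hu z hz i)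
  set a : ℕ → ℝ := fun i ↦ f (uMap m (i + m) x)
  have hb_le_a : ∀ i, f (uMap m (i + m) y) ≤ a i := fun i ↦
    hf (hu y hy i) (hu x hx i) (uMap_antitoneOn hm (m.le_add_left i) hx.1 hy.1 hxy)
  have ha : Antitone a := fun i j hij ↦
    hf (hu x hx j) (hu x hx i) (antitone_uMap_add hm hx.1 hij)
  have hP : ∀ z ∈ Icc 0 (theta m), ∀ i,
      Pfun m (i + m) z = Ptail m (i + m) z - Ptail m (i + 1 + m) z := fun z hz i ↦ by
    rw [Pfun_eq_Ptail_sub hm (m.le_add_left i) hz.1, Nat.add_right_comm]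
  have hsum : ∀ z ∈ Icc 0 (theta m),
      Summable fun i ↦ (Ptail m (i + m) z - Ptail m (i + 1 + m) z) * a i := fun z hz ↦ by
    simpa only [hP z hz] using summable_Pfun_mul hm le_rfl hz.1 (hbdd x hx)
  -- A larger `x` moves the tails of the weights `P_i(x)` up, i.e. towards the smaller `a i`.
  have hshift := tsum_sub_mul_le_tsum_sub_mul_of_antitone
    (by simp only [zero_add, Ptail_self hm hx.1, Ptail_self hm hy.1])
    (fun i ↦ Ptail_mono hm (m.le_add_left i) hx.1 hxy)
    ((tendsto_Ptail_atTop hm x).comp (tendsto_add_atTop_nat m))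
    ((tendsto_Ptail_atTop hm y).comp (tendsto_add_atTop_nat m)) ha (hbdd x hx)
    (hsum x hx) (hsum y hy)
  simp only [← hP x hx, ← hP y hy] at hshift
  calc Uop m f y ≤ ∑' i, Pfun m (i + m) y * a i :=
        (summable_Pfun_mul hm le_rfl hy.1 (hbdd y hy)).tsum_le_tsum
          (fun i ↦ mul_le_mul_of_nonneg_left (hb_le_a i) (Pfun_nonneg hm (m.le_add_left i) hy.1))
          (summable_Pfun_mul hm le_rfl hy.1 (hbdd x hx))
    _ ≤ Uop m f x := hshift

lemma Uop_zero_sub_Uop_theta_le (hm : 0 < m) (hf : MonotoneOn f (Icc 0 (theta m))) :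
    Uop m f 0 - Uop m f (theta m) ≤ (f (theta m) - f 0) / (m + 1) := by
  have hθ := theta_pos hm
  have h₀ : (0 : ℝ) ∈ Icc 0 (theta m) := ⟨le_rfl, hθ.le⟩
  have hm₀ : (0 : ℝ) < m := by exact_mod_cast hm
  set g : ℕ → ℝ := fun i ↦ Pfun m (i + m) 0 * f (uMap m (i + m) 0)
  have hg : Summable g := summable_Pfun_mul hm le_rfl le_rfl fun i ↦
    abs_le_max_abs_abs_of_monotoneOn hf (uMap_mem_Icc hm (m.le_add_left i) h₀)
  set S := ∑' i, g (i + 1)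
  have hg₀ : g 0 = f (theta m) / (m + 1) := by
    simp only [g, zero_add, Pfun_self_zero hm, uMap_self_zero hm, one_div_mul_eq_div]
  have hU₀ : Uop m f 0 = f (theta m) / (m + 1) + S := by
    rw [Uop, hg.tsum_eq_zero_add, hg₀]
  have hUθ : Uop m f (theta m) = (m + 1) / m * S := by
    rw [Uop, ← tsum_mul_left]
    refine tsum_congr fun i ↦ ?_
    simp only [g, Pfun_theta hm, uMap_theta, Nat.add_right_comm i 1 m]
    ring
  have hS : f 0 * (m / (m + 1)) ≤ S := by
    have hP : HasSum (fun i ↦ Pfun m (i + 1 + m) 0) (m / (m + 1)) := by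
      simpa only [add_assoc, add_comm 1 m, Ptail_succ_self_zero hm] using
        hasSum_Pfun hm m.le_succ (le_refl (0 : ℝ))
    rw [← hP.tsum_eq, ← tsum_mul_left]
    refine (hP.summable.mul_left _).tsum_le_tsum (fun i ↦ ?_) ((summable_nat_add_iff 1).2 hg)
    have hu := uMap_mem_Icc hm (m.le_add_left (i + 1)) h₀
    rw [mul_comm]
    exact mul_le_mul_of_nonneg_left (hf h₀ hu hu.1) (Pfun_nonneg hm (m.le_add_left _) le_rfl)
  have hdiff : f (theta m) / (m + 1) + S - (m + 1) / m * S =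
      (f (theta m) - f 0) / (m + 1) - (S - f 0 * (m / (m + 1))) / m := by
    field_simp
    ring
  rw [hU₀, hUθ, hdiff, sub_le_self_iff]
  exact div_nonneg (sub_nonneg.2 hS) hm₀.le

lemma eVariationOn_Uop_le_of_monotoneOn (hm : 0 < m) (hf : MonotoneOn f (Icc 0 (theta m))) :
    eVariationOn (Uop m f) (Icc 0 (theta m)) ≤
      ((m : ℝ≥0∞) + 1)⁻¹ * eVariationOn f (Icc 0 (theta m)) := by
  have hθ := theta_pos hm
  have h₀ : (0 : ℝ) ∈ Icc 0 (theta m) := ⟨le_rfl, hθ.le⟩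
  have hθ' : theta m ∈ Icc 0 (theta m) := ⟨hθ.le, le_rfl⟩
  have hvar : ∀ {g : ℝ → ℝ}, MonotoneOn g (Icc 0 (theta m)) →
      eVariationOn g (Icc 0 (theta m)) = .ofReal (g (theta m) - g 0) := fun hg ↦ by
    rw [← hg.eVariationOn_eq h₀ hθ', inter_self]
  calc eVariationOn (Uop m f) (Icc 0 (theta m))
      = eVariationOn (-Uop m f) (Icc 0 (theta m)) := (eVariationOn_neg _ _).symm
    _ = .ofReal (Uop m f 0 - Uop m f (theta m)) := by
      rw [hvar (g := -Uop m f) (Uop_antitoneOn hm hf).neg, Pi.neg_apply, Pi.neg_apply,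
        neg_sub_neg]
    _ ≤ .ofReal ((f (theta m) - f 0) / (m + 1)) :=
      ENNReal.ofReal_le_ofReal (Uop_zero_sub_Uop_theta_le hm hf)
    _ = ((m : ℝ≥0∞) + 1)⁻¹ * eVariationOn f (Icc 0 (theta m)) := by
      rw [hvar hf, ENNReal.ofReal_div_of_pos (by positivity), ENNReal.div_eq_inv_mul,
        ENNReal.ofReal_add (by positivity) zero_le_one, ENNReal.ofReal_natCast, ENNReal.ofReal_one]

end Operator

theorem Uop_variation_bound_general (m : ℕ) (hm : 2 ≤ m)
    (f : ℝ → ℝ)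
    (hmono : MonotoneOn f (Icc 0 (theta m)) ∨ AntitoneOn f (Icc 0 (theta m))) :
    eVariationOn (Uop m f) (Icc 0 (theta m)) ≤
      ((m : ℝ≥0∞) + 1)⁻¹ * eVariationOn f (Icc 0 (theta m)) := by
  have hm₀ : 0 < m := by omega
  rcases hmono with hf | hf
  · exact eVariationOn_Uop_le_of_monotoneOn hm₀ hf
  · simpa only [Uop_neg, eVariationOn_neg] using
      eVariationOn_Uop_le_of_monotoneOn (f := -f) hm₀ hf.neg

/-- If f is bounded and monotone then var(Uf) ≤ (1/(m+1))·var(f),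
where var denotes the total variation on [0,θ]. -/
theorem Uop_variation_bound (m : ℕ) (hm : 2 ≤ m) (hns : ¬ IsSquare m)
    (f : ℝ → ℝ)
    (hbdd : ∃ C : ℝ, ∀ x ∈ Icc 0 (theta m), |f x| ≤ C)
    (hmono : MonotoneOn f (Icc 0 (theta m)) ∨ AntitoneOn f (Icc 0 (theta m))) :
    eVariationOn (Uop m f) (Icc 0 (theta m)) ≤
      ((m : ℝ≥0∞) + 1)⁻¹ * eVariationOn f (Icc 0 (theta m)) :=
  Uop_variation_bound_general m hm f hmono
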